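/- For positive semidefinite operators P, Q on C^n and any operator X on C^n, the block operator [[P, X], [X*, Q]] is positive semidefinite if and only if X = √P K √Q for some operator K with spectral norm at most 1. -/

import Mathlib

open Matrix Kronecker
open scoped ComplexOrder

/-- Trace norm `‖A‖₁ = Tr √(Aᴴ A)` of a complex matrix. -/
noncomputable def traceNorm {α β : Type*} [Fintype α] [Fintype β] [DecidableEq α] [DecidableEq β]
    (A : Matrix α β ℂ) : ℝ :=
  (((Matrix.posSemidef_conjTranspose_mul_self A).1.eigenvectorUnitary : Matrix β β ℂ) *
    diagonal (((↑) : ℝ → ℂ) ∘ Real.sqrt ∘ (Matrix.posSemidef_conjTranspose_mul_self A).1.eigenvalues) *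
    (star (Matrix.posSemidef_conjTranspose_mul_self A).1.eigenvectorUnitary : Matrix β β ℂ)).trace.re

/-- Spectral norm (operator norm w.r.t. Euclidean norms). -/
noncomputable def specNorm {α β : Type*} [Fintype α] [Fintype β] [DecidableEq α] [DecidableEq β]
    (A : Matrix α β ℂ) : ℝ :=
  ‖LinearMap.toContinuousLinearMap (Matrix.toEuclideanLin A)‖

/-- Frobenius norm. -/
noncomputable def frobNorm {α β : Type*} [Fintype α] [Fintype β]
    (A : Matrix α β ℂ) : ℝ :=
  Real.sqrt ((Aᴴ * A).trace.re)

/-- Positive semidefinite square root (junk value `0` off the PSD cone). -/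
noncomputable def msqrt {α : Type*} [Fintype α] [DecidableEq α]
    (P : Matrix α α ℂ) : Matrix α α ℂ :=
  open scoped Classical in
  if h : P.PosSemidef then (h.1.eigenvectorUnitary : Matrix α α ℂ) *
    diagonal (((↑) : ℝ → ℂ) ∘ Real.sqrt ∘ h.1.eigenvalues) * (star h.1.eigenvectorUnitary : Matrix α α ℂ) else 0

/-- Fidelity `F(P,Q) = ‖√P √Q‖₁`. -/
noncomputable def fid {α : Type*} [Fintype α] [DecidableEq α]
    (P Q : Matrix α α ℂ) : ℝ :=
  traceNorm (msqrt P * msqrt Q)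

/-- Partial trace over the second (right) tensor factor. -/
noncomputable def ptraceRight {a b : ℕ} (M : Matrix (Fin a × Fin b) (Fin a × Fin b) ℂ) :
    Matrix (Fin a) (Fin a) ℂ :=
  Matrix.of fun i j => ∑ s : Fin b, M (i, s) (j, s)

/-- Partial trace over the first (left) tensor factor. -/
noncomputable def ptraceLeft {a b : ℕ} (M : Matrix (Fin a × Fin b) (Fin a × Fin b) ℂ) :
    Matrix (Fin b) (Fin b) ℂ :=
  Matrix.of fun i j => ∑ s : Fin a, M (s, i) (s, j)

/-- `Φ ⊗ id` acting on `L(Cⁿ ⊗ Cᵏ)`. -/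
noncomputable def tensorId {n m k : ℕ}
    (Φ : Matrix (Fin n) (Fin n) ℂ → Matrix (Fin m) (Fin m) ℂ)
    (M : Matrix (Fin n × Fin k) (Fin n × Fin k) ℂ) :
    Matrix (Fin m × Fin k) (Fin m × Fin k) ℂ :=
  Matrix.of fun p q => Φ (Matrix.of fun a c => M (a, p.2) (c, q.2)) p.1 q.1

/-- Completely bounded trace norm `¦¦¦Φ¦¦¦₁ = ‖Φ ⊗ id_{L(Cⁿ)}‖₁`. -/
noncomputable def cbTraceNorm {n m : ℕ}
    (Φ : Matrix (Fin n) (Fin n) ℂ → Matrix (Fin m) (Fin m) ℂ) : ℝ :=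
  sSup {c : ℝ | ∃ M : Matrix (Fin n × Fin n) (Fin n × Fin n) ℂ,
    traceNorm M ≤ 1 ∧ c = traceNorm (tensorId Φ M)}

/-- Completely bounded spectral norm of `Ψ : L(Cᵐ) → L(Cⁿ)`, with ancilla `Cⁿ`. -/
noncomputable def cbSpecNorm {m n : ℕ}
    (Ψ : Matrix (Fin m) (Fin m) ℂ → Matrix (Fin n) (Fin n) ℂ) : ℝ :=
  sSup {c : ℝ | ∃ M : Matrix (Fin m × Fin n) (Fin m × Fin n) ℂ,
    specNorm M ≤ 1 ∧ c = specNorm (tensorId Ψ M)}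

/-- Choi–Jamiołkowski representation `J(Φ) = ∑ᵢⱼ Φ(Eᵢⱼ) ⊗ Eᵢⱼ`. -/
noncomputable def choi {n m : ℕ}
    (Φ : Matrix (Fin n) (Fin n) ℂ → Matrix (Fin m) (Fin m) ℂ) :
    Matrix (Fin m × Fin n) (Fin m × Fin n) ℂ :=
  ∑ i : Fin n, ∑ j : Fin n, (Φ (Matrix.single i j 1)) ⊗ₖ (Matrix.single i j 1)

/-- vec mapping. -/
def vecM {n : ℕ} (A : Matrix (Fin n) (Fin n) ℂ) : Fin n × Fin n → ℂ := fun p => A p.1 p.2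

/-!
Write `S = √P` and `T = √Q`. Since `[[Sᴴ S, Sᴴ K T], [Tᴴ Kᴴ S, Tᴴ T]] = Dᴴ [[1, K], [Kᴴ, 1]] D`
with `D = diag(S, T)`, and the Schur complement of `[[1, K], [Kᴴ, 1]]` is `1 - Kᴴ K`, every
contraction `K` gives a positive block matrix.

Conversely, let `S⁺, T⁺` be the Moore–Penrose inverses and `K = S⁺ X T⁺`. Compressing the block
matrix by `diag(S⁺, T⁺)` gives `[[p, K], [Kᴴ, q]] ≥ 0` with `p, q ≤ 1` the support projections
of `P, Q`, so `[[1, K], [Kᴴ, 1]] ≥ 0` and `‖K‖ ≤ 1`. Positivity also forces `Xᴴ v = 0` whenever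
`P v = 0` (and `X w = 0` whenever `Q w = 0`), so `X = p X q = S K T`.
-/

open scoped MatrixOrder Matrix.Norms.L2Operator

section
variable {m n k : Type*} [Fintype m] [Fintype n] [DecidableEq m] [DecidableEq n]

lemma Matrix.PosSemidef.mul_eq_zero_of_conjTranspose_mul_mul_eq_zero {M : Matrix m m ℂ}
    (hM : M.PosSemidef) {F : Matrix m k ℂ} (h : Fᴴ * M * F = 0) : M * F = 0 := by
  obtain ⟨R, rfl⟩ := CStarAlgebra.nonneg_iff_eq_star_mul_self.mp hM.nonneg
  rw [star_eq_conjTranspose] at h ⊢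
  rw [conjTranspose_mul_self_mul_eq_zero, ← conjTranspose_mul_self_eq_zero]
  simpa only [conjTranspose_mul, Matrix.mul_assoc] using h

lemma conjTranspose_mul_eq_zero_of_posSemidef_fromBlocks {P : Matrix m m ℂ} {X : Matrix m n ℂ}
    {Q : Matrix n n ℂ} (h : (fromBlocks P X Xᴴ Q).PosSemidef) {E : Matrix m k ℂ}
    (hE : P * E = 0) : Xᴴ * E = 0 := by
  have hF := h.mul_eq_zero_of_conjTranspose_mul_mul_eq_zero (F := fromBlocks E 0 0 (0 : Matrix n n ℂ))
    (by simp [fromBlocks_conjTranspose, fromBlocks_multiply, Matrix.mul_assoc, hE])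
  simp only [fromBlocks_multiply, hE, Matrix.mul_zero, add_zero, ← fromBlocks_zero,
    fromBlocks_inj] at hF
  exact hF.2.2.1

lemma mul_eq_zero_of_posSemidef_fromBlocks {P : Matrix m m ℂ} {X : Matrix m n ℂ}
    {Q : Matrix n n ℂ} (h : (fromBlocks P X Xᴴ Q).PosSemidef) {E : Matrix n k ℂ}
    (hE : Q * E = 0) : X * E = 0 := by
  have hswap : (fromBlocks Q Xᴴ Xᴴᴴ P).PosSemidef := by
    rwa [conjTranspose_conjTranspose, ← posSemidef_submatrix_equiv (Equiv.sumComm m n),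
      Equiv.sumComm_apply, fromBlocks_submatrix_sum_swap_sum_swap]
  simpa only [conjTranspose_conjTranspose] using
    conjTranspose_mul_eq_zero_of_posSemidef_fromBlocks hswap hE

lemma Matrix.PosSemidef.fromBlocks_zero_zero {A : Matrix m m ℂ} {B : Matrix n n ℂ}
    (hA : A.PosSemidef) (hB : B.PosSemidef) : (fromBlocks A 0 0 B).PosSemidef := by
  obtain ⟨R, rfl⟩ := CStarAlgebra.nonneg_iff_eq_star_mul_self.mp hA.nonneg
  obtain ⟨S, rfl⟩ := CStarAlgebra.nonneg_iff_eq_star_mul_self.mp hB.nonneg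
  simpa [star_eq_conjTranspose, fromBlocks_conjTranspose, fromBlocks_multiply] using
    posSemidef_conjTranspose_mul_self (fromBlocks R 0 0 S)

end

section
variable {m : Type*} [Fintype m] [DecidableEq m]

lemma specNorm_eq_norm (K : Matrix m m ℂ) : specNorm K = ‖K‖ := rfl

lemma posSemidef_fromBlocks_one_iff_norm_le_one (K : Matrix m m ℂ) :
    (fromBlocks 1 K Kᴴ 1).PosSemidef ↔ ‖K‖ ≤ 1 := by
  have : Invertible (1 : Matrix m m ℂ) := invertibleOne
  rw [PosDef.fromBlocks₁₁ K 1 PosDef.one, inv_one, Matrix.mul_one, ← le_iff,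
    ← star_eq_conjTranspose, ← CStarAlgebra.norm_le_one_iff_of_nonneg _ (star_mul_self_nonneg K),
    CStarRing.norm_star_mul_self, ← sq, sq_le_one_iff₀ (norm_nonneg K)]

lemma posSemidef_fromBlocks_of_norm_le_one (S T K : Matrix m m ℂ) (hK : ‖K‖ ≤ 1) :
    (fromBlocks (Sᴴ * S) (Sᴴ * K * T) (Tᴴ * Kᴴ * S) (Tᴴ * T)).PosSemidef := by
  have hD := (posSemidef_fromBlocks_one_iff_norm_le_one K).mpr hK
  simpa [fromBlocks_conjTranspose, fromBlocks_multiply, Matrix.mul_assoc] using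
    hD.conjTranspose_mul_mul_same (fromBlocks S 0 0 T)

lemma Matrix.continuousOn_real_spectrum {𝕜 : Type*} [RCLike 𝕜] (f : ℝ → ℝ) (A : Matrix m m 𝕜) :
    ContinuousOn f (spectrum ℝ A) :=
  A.finite_real_spectrum.continuousOn f

lemma msqrt_eq_cfc {P : Matrix m m ℂ} (hP : P.PosSemidef) : msqrt P = cfc Real.sqrt P := by
  rw [msqrt, dif_pos hP, hP.1.cfc_eq, IsHermitian.cfc, Unitary.conjStarAlgAut_apply]
  rfl

lemma isHermitian_msqrt {P : Matrix m m ℂ} (hP : P.PosSemidef) : (msqrt P).IsHermitian := by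
  rw [msqrt_eq_cfc hP]
  exact cfc_predicate _ P

lemma msqrt_mul_self {P : Matrix m m ℂ} (hP : P.PosSemidef) : msqrt P * msqrt P = P := by
  have hc := (continuousOn_real_spectrum · P)
  rw [msqrt_eq_cfc hP, ← cfc_mul _ _ _ (hc _) (hc _)]
  nth_rw 2 [← cfc_id' ℝ P]
  exact cfc_congr fun x hx => Real.mul_self_sqrt (spectrum_nonneg_of_nonneg hP.nonneg hx)

/-- Since `0⁻¹ = 0` in `ℝ`, this is the Moore–Penrose inverse of `√P`. -/
noncomputable def pinvSqrt (P : Matrix m m ℂ) : Matrix m m ℂ := cfc (fun x : ℝ => (√x)⁻¹) P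

lemma isHermitian_pinvSqrt (P : Matrix m m ℂ) : (pinvSqrt P).IsHermitian :=
  cfc_predicate _ P

lemma pinvSqrt_mul_mul_pinvSqrt_le_one (P : Matrix m m ℂ) :
    pinvSqrt P * P * pinvSqrt P ≤ 1 := by
  have hc := (continuousOn_real_spectrum · P)
  by_cases hP : IsSelfAdjoint P
  · nth_rw 2 [← cfc_id' ℝ P]
    rw [pinvSqrt, ← cfc_mul _ _ _ (hc _) (hc _), ← cfc_mul _ _ _ (hc _) (hc _)]
    refine cfc_le_one _ _ fun x _ => ?_
    rcases eq_or_ne (√x) 0 with h | h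
    · simp [h]
    · have hx := Real.sqrt_ne_zero'.mp h
      rw [show (√x)⁻¹ * x * (√x)⁻¹ = x / √x ^ 2 by ring, Real.sq_sqrt hx.le, div_self hx.ne']
  · simp [pinvSqrt, cfc_apply_of_not_predicate P hP]

lemma mul_one_sub_pinvSqrt_mul_msqrt {P : Matrix m m ℂ} (hP : P.PosSemidef) :
    P * (1 - pinvSqrt P * msqrt P) = 0 := by
  have hc := (continuousOn_real_spectrum · P)
  nth_rw 1 [← cfc_id' ℝ P]
  rw [msqrt_eq_cfc hP, pinvSqrt, ← cfc_mul _ _ _ (hc _) (hc _), ← cfc_one ℝ P,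
    ← cfc_sub _ _ _ (hc _) (hc _), ← cfc_mul _ _ _ (hc _) (hc _), ← cfc_zero ℝ P]
  refine cfc_congr fun x hx => ?_
  rcases (spectrum_nonneg_of_nonneg hP.nonneg hx).eq_or_lt with rfl | hx
  · simp
  · simp [inv_mul_cancel₀ (Real.sqrt_pos.mpr hx).ne']

lemma exists_norm_le_one_of_posSemidef_fromBlocks {P Q X : Matrix m m ℂ} (hP : P.PosSemidef)
    (hQ : Q.PosSemidef) (h : (fromBlocks P X Xᴴ Q).PosSemidef) :
    ∃ K : Matrix m m ℂ, ‖K‖ ≤ 1 ∧ X = msqrt P * K * msqrt Q := by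
  refine ⟨pinvSqrt P * X * pinvSqrt Q, ?_, ?_⟩
  · have hcompress := h.conjTranspose_mul_mul_same (fromBlocks (pinvSqrt P) 0 0 (pinvSqrt Q))
    have hdefect := PosSemidef.fromBlocks_zero_zero (pinvSqrt_mul_mul_pinvSqrt_le_one P)
      (pinvSqrt_mul_mul_pinvSqrt_le_one Q)
    rw [← posSemidef_fromBlocks_one_iff_norm_le_one]
    convert hcompress.add hdefect using 1
    simp [fromBlocks_conjTranspose, fromBlocks_multiply, fromBlocks_add,
      (isHermitian_pinvSqrt P).eq, (isHermitian_pinvSqrt Q).eq, Matrix.mul_assoc]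
  · have hright : X * (pinvSqrt Q * msqrt Q) = X := by
      have := mul_eq_zero_of_posSemidef_fromBlocks h (mul_one_sub_pinvSqrt_mul_msqrt hQ)
      rwa [Matrix.mul_sub, Matrix.mul_one, sub_eq_zero, eq_comm] at this
    have hleft : msqrt P * pinvSqrt P * X = X := by
      have := congrArg conjTranspose
        (conjTranspose_mul_eq_zero_of_posSemidef_fromBlocks h (mul_one_sub_pinvSqrt_mul_msqrt hP))
      rwa [conjTranspose_mul, conjTranspose_sub, conjTranspose_one, conjTranspose_mul,
        (isHermitian_pinvSqrt P).eq, (isHermitian_msqrt hP).eq, conjTranspose_conjTranspose,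
        conjTranspose_zero, Matrix.sub_mul, Matrix.one_mul, sub_eq_zero, eq_comm] at this
    calc X = msqrt P * pinvSqrt P * X * (pinvSqrt Q * msqrt Q) := by rw [hleft, hright]
      _ = msqrt P * (pinvSqrt P * X * pinvSqrt Q) * msqrt Q := by simp only [Matrix.mul_assoc]

end

/-- block PSD criterion (Bhatia, Theorem IX.5.9). -/
theorem stmt0 {n : ℕ} (P Q X : Matrix (Fin n) (Fin n) ℂ)
    (hP : P.PosSemidef) (hQ : Q.PosSemidef) :
    (Matrix.fromBlocks P X Xᴴ Q).PosSemidef ↔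
      ∃ K : Matrix (Fin n) (Fin n) ℂ, specNorm K ≤ 1 ∧ X = msqrt P * K * msqrt Q := by
  simp only [specNorm_eq_norm]
  refine ⟨exists_norm_le_one_of_posSemidef_fromBlocks hP hQ, ?_⟩
  rintro ⟨K, hK, rfl⟩
  simpa [(isHermitian_msqrt hP).eq, (isHermitian_msqrt hQ).eq, msqrt_mul_self hP,
    msqrt_mul_self hQ, Matrix.mul_assoc] using
    posSemidef_fromBlocks_of_norm_le_one (msqrt P) (msqrt Q) K hK
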